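/- Let V and W be finite-dimensional complex vector spaces equipped with quaternionic structures J_V and J_W respectively, and let f : V → W be a ℂ-linear map satisfying f ∘ J_V = J_W ∘ f. Then the complex dimensions finrank ℂ (ker f) and finrank ℂ (W ⧸ range f) are both even; in particular, the index (finrank ℂ (ker f) : ℤ) - (finrank ℂ (W ⧸ range f) : ℤ) is an even integer. -/

import Mathlib

/-!
A quaternionic structure `J` together with multiplication by `i` satisfies the relations
`i² = j² = -1`, `ji = -ij` of the quaternion units, so it makes `V` a module over `ℍ[ℝ]`.
Counting real dimensions, `2 · dim_ℂ V = 4 · dim_ℍ V`, hence `dim_ℂ V` is even. An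
intertwining map `f` has a `J`-invariant kernel, so `dim ker f` is even, and rank–nullity
makes `dim coker f` even as well.
-/

open Module Quaternion

noncomputable section

structure IsQuaternionicStructure {V : Type*} [AddCommGroup V] [Module ℂ V]
    (J : V →ₗ[ℝ] V) : Prop where
  apply_apply : ∀ v, J (J v) = -v
  apply_smul : ∀ (z : ℂ) (v : V), J (z • v) = starRingEnd ℂ z • J v

namespace IsQuaternionicStructure

variable {V : Type*} [AddCommGroup V] [Module ℂ V] {J : V →ₗ[ℝ] V}

def quaternionHom (hJ : IsQuaternionicStructure J) : ℍ[ℝ] →ₐ[ℝ] Module.End ℝ V :=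
  QuaternionAlgebra.Basis.liftHom
    { i := Complex.I • 1
      j := J
      k := Complex.I • J
      i_mul_i := by ext v; simp [smul_smul]
      j_mul_j := by ext v; simp [hJ.apply_apply]
      i_mul_j := by ext v; simp
      j_mul_i := by ext v; simp [hJ.apply_smul] }

abbrev quaternionModule (hJ : IsQuaternionicStructure J) : Module ℍ[ℝ] V :=
  Module.compHom V hJ.quaternionHom.toRingHom

theorem even_finrank [FiniteDimensional ℂ V] (hJ : IsQuaternionicStructure J) :
    Even (finrank ℂ V) := by
  let _ := hJ.quaternionModule
  have : IsScalarTower ℝ ℍ[ℝ] V := ⟨fun r q v => by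
    show hJ.quaternionHom (r • q) v = _
    rw [map_smul]; rfl⟩
  have hH := finrank_mul_finrank ℝ ℍ[ℝ] V
  have hC := finrank_mul_finrank ℝ ℂ V
  rw [Quaternion.finrank_eq_four] at hH
  rw [Complex.finrank_real_complex] at hC
  exact ⟨finrank ℍ[ℝ] V, by omega⟩

theorem restrict (hJ : IsQuaternionicStructure J) {p : Submodule ℂ V}
    (hp : ∀ v ∈ p, J v ∈ p) :
    IsQuaternionicStructure (V := p)
      (J.restrict (p := p.restrictScalars ℝ) (q := p.restrictScalars ℝ) hp) :=
  ⟨fun v => Subtype.ext (hJ.apply_apply v), fun z v => Subtype.ext (hJ.apply_smul z v)⟩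

end IsQuaternionicStructure

end

theorem LinearMap.even_finrank_quotient_range {K V W : Type*} [DivisionRing K]
    [AddCommGroup V] [Module K V] [FiniteDimensional K V]
    [AddCommGroup W] [Module K W] [FiniteDimensional K W] (f : V →ₗ[K] W)
    (hV : Even (finrank K V)) (hW : Even (finrank K W)) (hker : Even (finrank K (ker f))) :
    Even (finrank K (W ⧸ range f)) := by
  have hrange : Even (finrank K (range f)) := by
    rw [← f.finrank_range_add_finrank_ker] at hV
    exact (Nat.even_add.mp hV).mpr hker
  rw [← (range f).finrank_quotient_add_finrank] at hW
  exact (Nat.even_add.mp hW).mpr hrange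

/-- If `V` and `W` are finite-dimensional complex vector spaces with quaternionic
structures `JV`, `JW`, and `f : V →ₗ[ℂ] W` intertwines them, then the kernel and the
cokernel of `f` have even complex dimension, and in particular the index of `f`
is an even integer. -/
theorem even_index_of_quaternionic_linear
    (V W : Type*) [AddCommGroup V] [Module ℂ V] [FiniteDimensional ℂ V]
    [AddCommGroup W] [Module ℂ W] [FiniteDimensional ℂ W]
    (JV : V →ₗ[ℝ] V) (JW : W →ₗ[ℝ] W)
    (hJV : ∀ v : V, JV (JV v) = -v)
    (hJVconj : ∀ (z : ℂ) (v : V), JV (z • v) = (starRingEnd ℂ z) • JV v)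
    (hJW : ∀ w : W, JW (JW w) = -w)
    (hJWconj : ∀ (z : ℂ) (w : W), JW (z • w) = (starRingEnd ℂ z) • JW w)
    (f : V →ₗ[ℂ] W)
    (hf : ∀ v : V, f (JV v) = JW (f v)) :
    Even (Module.finrank ℂ (LinearMap.ker f)) ∧
    Even (Module.finrank ℂ (W ⧸ LinearMap.range f)) ∧
    Even ((Module.finrank ℂ (LinearMap.ker f) : ℤ) -
      (Module.finrank ℂ (W ⧸ LinearMap.range f) : ℤ)) := by
  have hV : IsQuaternionicStructure JV := ⟨hJV, hJVconj⟩
  have hW : IsQuaternionicStructure JW := ⟨hJW, hJWconj⟩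
  have hker_inv : ∀ v ∈ LinearMap.ker f, JV v ∈ LinearMap.ker f := fun v hv => by
    rw [LinearMap.mem_ker, hf, LinearMap.mem_ker.mp hv, map_zero]
  have hker : Even (finrank ℂ (LinearMap.ker f)) := (hV.restrict hker_inv).even_finrank
  have hcoker : Even (finrank ℂ (W ⧸ LinearMap.range f)) :=
    f.even_finrank_quotient_range hV.even_finrank hW.even_finrank hker
  exact ⟨hker, hcoker, hker.natCast.sub hcoker.natCast⟩
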